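/- arXiv:2510.27142 — 2 statements merged into one kernel-verified Lean document; each statement's English description precedes it below -/
import Mathlib

section
/- (Lemma 2.2, adjoint reduction.) For every integer N ≥ 3 the following identity of ℂ-linear operators on V holds (indices taken mod N, so x̌_0 = x̌_N): e_q(−x̌_{N−2}) ∘ e_q(−x̌_{N−3}) ∘ ⋯ ∘ e_q(−x̌_1) ∘ e_q(−x̌_0) ∘ e_q(−x̌_1)^{−1} ∘ ⋯ ∘ e_q(−x̌_{N−2})^{−1} = e_q(−x̌_0) ∘ e_q(−x̌_0∘x̌_1) ∘ e_q(−x̌_0∘x̌_1∘x̌_2) ∘ ⋯ ∘ e_q(−x̌_0∘x̌_1∘⋯∘x̌_{N−2}). -/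
/-!
Lemma 2.2 (adjoint reduction).  `V = MvPowerSeries (ZMod N) ℂ`; `p i` is the
automorphism `x^ν ↦ q^{ν_i} x^ν`; `x̌_i = M_{x_i} ∘ p_i⁻¹ ∘ p_{i-1}` is
degree-raising.  For degree-raising `T` the q-exponentials
`e_q(−T) = ∑ (−1)ⁿTⁿ/(q;q)_n` and `E_q(T) = ∑ q^{n(n−1)/2}Tⁿ/(q;q)_n` are
defined by their (finite) coefficientwise sums, and `E_q(T) = e_q(−T)⁻¹`.
-/

noncomputable section
open scoped Classical

variable {N : ℕ}

def qPoch (q : ℂ) (n : ℕ) : ℂ := ∏ k ∈ Finset.range n, (1 - q ^ (k + 1))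

def degOf (ν : ZMod N →₀ ℕ) : ℕ := ν.sum fun _ k => k

/-- the automorphism `p_i : x^ν ↦ q^{ν_i} x^ν`. -/
def pmap (q : ℂ) (i : ZMod N) (f : MvPowerSeries (ZMod N) ℂ) : MvPowerSeries (ZMod N) ℂ :=
  fun ν => q ^ (ν i) * f ν

/-- the inverse automorphism `p_i⁻¹ : x^ν ↦ q^{−ν_i} x^ν`. -/
def pinv (q : ℂ) (i : ZMod N) (f : MvPowerSeries (ZMod N) ℂ) : MvPowerSeries (ZMod N) ℂ :=
  fun ν => q ^ (-(ν i : ℤ)) * f ν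

/-- `x̌_i := M_{x_i} ∘ p_i⁻¹ ∘ p_{i−1}` (apply `p_{i−1}`, then `p_i⁻¹`, then
multiply by `x_i`). -/
def xcheck (q : ℂ) (i : ZMod N) (f : MvPowerSeries (ZMod N) ℂ) : MvPowerSeries (ZMod N) ℂ :=
  MvPowerSeries.X i * pinv q i (pmap q (i - 1) f)

/-- `e_q(−T) = ∑_{n≥0} (−1)ⁿ Tⁿ/(q;q)_n`, coefficientwise finite for
degree-raising `T`. -/
def eqExp (q : ℂ) (T : MvPowerSeries (ZMod N) ℂ → MvPowerSeries (ZMod N) ℂ)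
    (f : MvPowerSeries (ZMod N) ℂ) : MvPowerSeries (ZMod N) ℂ :=
  fun ν => ∑ n ∈ Finset.range (degOf ν + 1), ((-1 : ℂ) ^ n / qPoch q n) * (T^[n] f) ν

/-- `E_q(T) = ∑_{n≥0} q^{n(n−1)/2} Tⁿ/(q;q)_n = e_q(−T)⁻¹`, coefficientwise
finite for degree-raising `T`. -/
def EqExp (q : ℂ) (T : MvPowerSeries (ZMod N) ℂ → MvPowerSeries (ZMod N) ℂ)
    (f : MvPowerSeries (ZMod N) ℂ) : MvPowerSeries (ZMod N) ℂ :=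
  fun ν => ∑ n ∈ Finset.range (degOf ν + 1), (q ^ (n * (n - 1) / 2) / qPoch q n) * (T^[n] f) ν

/-- ascending composite `F 0 ∘ F 1 ∘ ⋯ ∘ F (k−1)`. -/
def compAsc {α : Type*} (F : ℕ → α → α) : ℕ → α → α
  | 0 => id
  | k + 1 => compAsc F k ∘ F k

/-- descending composite `F (k−1) ∘ ⋯ ∘ F 1 ∘ F 0`. -/
def compDesc {α : Type*} (F : ℕ → α → α) : ℕ → α → α
  | 0 => id
  | k + 1 => F k ∘ compDesc F k

/-!
Write `e(T)` for `e_q(−T)`. Induct on the number of conjugations: conjugating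
`e(x̌₀) e(x̌₀x̌₁) ⋯ e(x̌₀⋯x̌ₖ)` by `e(x̌ₖ₊₁)` fixes every factor but the last, since `x̌ₖ₊₁`
commutes with `x̌₀, …, x̌ₖ₋₁`, while `A = x̌ₖ₊₁` and `B = x̌₀⋯x̌ₖ` satisfy `AB = q BA`. For such a
pair the pentagon identity `e(A) e(B) = e(B) e(BA) e(A)` turns `e(A) e(B) e(A)⁻¹` into
`e(B) e(BA)`, which appends the next factor. Both commutation relations follow from writing
`x̌ᵢ f = xᵢ · f(aᵢ x)` with `aᵢ` equal to `q` at `i - 1` and to `q⁻¹` at `i`: this gives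
`aⱼ(i) x̌ᵢ x̌ⱼ = aᵢ(j) x̌ⱼ x̌ᵢ`.

All operators are degree-raising, so the coefficient of `x^ν` only sees the terms of degree at
most `|ν|`, and both exponential identities become identities of finite sums. Euler's inversion
`e_q(−z) E_q(z) = 1` holds because the product is invariant under `z ↦ qz`; the pentagon identity
compares normal-ordered coefficients of `B^X A^Y` and reduces to
`∑ₖ (−1)ᵏ q^(k(k−1)/2) (q;q)ₖ [n k]_q [m k]_q = q^(nm)`.
-/

namespace AdjointReduction

open Finset

section QSeries

open PowerSeries hiding mk

variable (q : ℂ)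

lemma qPoch_succ (n : ℕ) : qPoch q (n + 1) = qPoch q n * (1 - q ^ (n + 1)) :=
  prod_range_succ _ _

variable {q} in
lemma qPoch_ne_zero (hq : ∀ n : ℕ, 0 < n → q ^ n ≠ 1) (n : ℕ) : qPoch q n ≠ 0 :=
  prod_ne_zero_iff.2 fun k _ => sub_ne_zero.2 (hq (k + 1) k.succ_pos).symm

def eqExpCoeff (n : ℕ) : ℂ := (-1) ^ n / qPoch q n

def EqExpCoeff (n : ℕ) : ℂ := q ^ (n * (n - 1) / 2) / qPoch q n

lemma eqExpCoeff_succ (n : ℕ) :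
    eqExpCoeff q (n + 1) = -eqExpCoeff q n / (1 - q ^ (n + 1)) := by
  rw [eqExpCoeff, eqExpCoeff, qPoch_succ, ← div_div, pow_succ]
  ring

lemma EqExpCoeff_succ (n : ℕ) :
    EqExpCoeff q (n + 1) = q ^ n * EqExpCoeff q n / (1 - q ^ (n + 1)) := by
  rw [EqExpCoeff, EqExpCoeff, qPoch_succ, ← div_div, Nat.triangle_succ, pow_add]
  ring

variable {q} (hq : ∀ n : ℕ, 0 < n → q ^ n ≠ 1)
include hq

lemma rescale_mk_eqExpCoeff :
    rescale q (PowerSeries.mk (eqExpCoeff q)) = (1 + X) * PowerSeries.mk (eqExpCoeff q) := by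
  ext (_ | n) <;>
    simp only [coeff_rescale, coeff_mk, add_mul, one_mul, map_add, coeff_zero_X_mul,
      coeff_succ_X_mul]
  · simp
  · have h := sub_ne_zero.2 (hq (n + 1) n.succ_pos).symm
    rw [eqExpCoeff_succ]
    field_simp
    ring

lemma mk_EqExpCoeff_eq_mul_rescale :
    PowerSeries.mk (EqExpCoeff q) = (1 + X) * rescale q (PowerSeries.mk (EqExpCoeff q)) := by
  ext (_ | n) <;>
    simp only [coeff_rescale, coeff_mk, add_mul, one_mul, map_add, coeff_zero_X_mul,
      coeff_succ_X_mul]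
  · simp
  · have h := sub_ne_zero.2 (hq (n + 1) n.succ_pos).symm
    rw [EqExpCoeff_succ]
    field_simp
    ring

lemma mk_eqExpCoeff_mul_mk_EqExpCoeff :
    PowerSeries.mk (eqExpCoeff q) * PowerSeries.mk (EqExpCoeff q) = 1 := by
  have hF : rescale q (PowerSeries.mk (eqExpCoeff q) * PowerSeries.mk (EqExpCoeff q))
      = PowerSeries.mk (eqExpCoeff q) * PowerSeries.mk (EqExpCoeff q) := by
    rw [map_mul, rescale_mk_eqExpCoeff hq]
    conv_rhs => rw [mk_EqExpCoeff_eq_mul_rescale hq]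
    ring
  ext (_ | n)
  · simp [eqExpCoeff, EqExpCoeff, qPoch]
  · have h := congrArg (coeff (n + 1)) hF
    rw [coeff_rescale] at h
    rw [coeff_one, if_neg n.succ_ne_zero]
    refine (mul_eq_zero.1 ?_).resolve_left (sub_ne_zero.2 (hq (n + 1) n.succ_pos))
    linear_combination h

lemma sum_antidiagonal_eqExpCoeff_mul_EqExpCoeff (s : ℕ) :
    ∑ p ∈ antidiagonal s, eqExpCoeff q p.1 * EqExpCoeff q p.2 = if s = 0 then 1 else 0 := by
  simpa [coeff_mul, coeff_one] using congrArg (coeff s) (mk_eqExpCoeff_mul_mk_EqExpCoeff hq)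

end QSeries

section QBinomial

variable (q : ℂ)

def qBinom : ℕ → ℕ → ℂ
  | _, 0 => 1
  | 0, _ + 1 => 0
  | n + 1, k + 1 => qBinom n k + q ^ (k + 1) * qBinom n (k + 1)

@[simp] lemma qBinom_zero_right (n : ℕ) : qBinom q n 0 = 1 := by cases n <;> rfl

lemma qBinom_succ_succ (n k : ℕ) :
    qBinom q (n + 1) (k + 1) = qBinom q n k + q ^ (k + 1) * qBinom q n (k + 1) := rfl

lemma qBinom_eq_zero_of_lt {n k : ℕ} (h : n < k) : qBinom q n k = 0 := by
  induction n generalizing k with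
  | zero => obtain ⟨k, rfl⟩ := Nat.exists_eq_succ_of_ne_zero h.ne'; rfl
  | succ n ih =>
    obtain ⟨k, rfl⟩ := Nat.exists_eq_succ_of_ne_zero (by omega : k ≠ 0)
    rw [qBinom_succ_succ, ih (by omega), ih (by omega), mul_zero, add_zero]

@[simp] lemma qBinom_self (n : ℕ) : qBinom q n n = 1 := by
  induction n with
  | zero => rfl
  | succ n ih =>
    rw [qBinom_succ_succ, ih, qBinom_eq_zero_of_lt q n.lt_succ_self, mul_zero, add_zero]

lemma qPoch_mul_qPoch_mul_qBinom (k m : ℕ) :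
    qPoch q k * qPoch q m * qBinom q (k + m) k = qPoch q (k + m) := by
  induction k generalizing m with
  | zero => simp [qPoch]
  | succ k ihk =>
    induction m with
    | zero => simp [qPoch]
    | succ m ihm =>
      have h1 := ihk (m + 1)
      rw [show k + (m + 1) = k + 1 + m by omega, qPoch_succ q m] at h1
      rw [show k + 1 + (m + 1) = k + 1 + m + 1 by omega, qBinom_succ_succ, qPoch_succ q (k + 1 + m),
        qPoch_succ q k, qPoch_succ q m]
      rw [qPoch_succ q k] at ihm
      linear_combination (1 - q ^ (k + 1)) * h1 + q ^ (k + 1) * (1 - q ^ (m + 1)) * ihm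

variable {q} (hq : ∀ n : ℕ, 0 < n → q ^ n ≠ 1)
include hq

lemma pow_mul_qPoch_succ_mul_qBinom_succ (m k : ℕ) :
    q ^ k * (qPoch q (k + 1) * qBinom q m (k + 1))
      = qPoch q k * qBinom q m k * (q ^ k - q ^ m) := by
  rcases lt_trichotomy k m with hkm | rfl | hkm
  · obtain ⟨r, rfl⟩ := Nat.exists_eq_add_of_lt hkm
    have h1 := qPoch_mul_qPoch_mul_qBinom q (k + 1) r
    have h2 := qPoch_mul_qPoch_mul_qBinom q k (r + 1)
    rw [show k + (r + 1) = k + 1 + r by omega, qPoch_succ q r] at h2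
    rw [show k + r + 1 = k + 1 + r by omega]
    apply mul_left_cancel₀ (qPoch_ne_zero hq r)
    linear_combination q ^ k * h1 - q ^ k * h2
  · simp [qBinom_eq_zero_of_lt q k.lt_succ_self]
  · simp [qBinom_eq_zero_of_lt q hkm, qBinom_eq_zero_of_lt q (hkm.trans k.lt_succ_self)]

lemma sum_qPoch_mul_qBinom_mul_qBinom (n m : ℕ) :
    ∑ k ∈ range (n + 1), (-1) ^ k * q ^ (k * (k - 1) / 2) * qPoch q k * qBinom q n k * qBinom q m k
      = q ^ (n * m) := by
  induction n with
  | zero => simp [qPoch]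
  | succ n ih =>
    set u : ℕ → ℂ := fun k =>
      (-1) ^ k * q ^ (k * (k - 1) / 2) * q ^ k * qPoch q k * qBinom q n k * qBinom q m k
    have step : ∀ j ∈ range (n + 1),
        (-1) ^ (j + 1) * q ^ ((j + 1) * (j + 1 - 1) / 2) * qPoch q (j + 1)
            * qBinom q (n + 1) (j + 1) * qBinom q m (j + 1)
          = (u (j + 1) - u j) + q ^ m
            * ((-1) ^ j * q ^ (j * (j - 1) / 2) * qPoch q j * qBinom q n j * qBinom q m j) := by
      intro j _
      have h := pow_mul_qPoch_succ_mul_qBinom_succ hq m j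
      simp only [u, qBinom_succ_succ, Nat.triangle_succ, pow_add, pow_one]
      linear_combination (-((-1) ^ j * q ^ (j * (j - 1) / 2) * qBinom q n j)) * h
    rw [sum_range_succ', sum_congr rfl step, sum_add_distrib, sum_range_sub, ← mul_sum, ih]
    simp [u, qBinom_eq_zero_of_lt q n.lt_succ_self, qPoch, pow_succ]
    ring

lemma eqExpCoeff_mul_eqExpCoeff_mul_pow (X Y : ℕ) :
    eqExpCoeff q X * eqExpCoeff q Y * q ^ (X * Y)
      = ∑ k ∈ range (min X Y + 1), eqExpCoeff q (X - k)
          * (eqExpCoeff q k * q ^ (k * (k - 1) / 2)) * eqExpCoeff q (Y - k) := by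
  rw [← sum_qPoch_mul_qBinom_mul_qBinom hq X Y, mul_sum]
  refine (sum_subset (range_subset_range.2 (by omega)) fun k hk hk' => ?_).symm.trans
    (sum_congr rfl fun k hk => ?_)
  · simp only [mem_range] at hk hk'
    rw [qBinom_eq_zero_of_lt q (by omega : Y < k), mul_zero, mul_zero]
  · simp only [mem_range] at hk
    obtain ⟨a, rfl⟩ := Nat.exists_eq_add_of_le (by omega : k ≤ X)
    obtain ⟨b, rfl⟩ := Nat.exists_eq_add_of_le (by omega : k ≤ Y)
    have ha := qPoch_mul_qPoch_mul_qBinom q k a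
    have hb := qPoch_mul_qPoch_mul_qBinom q k b
    have hk0 := qPoch_ne_zero hq k
    have ha0 := qPoch_ne_zero hq a
    have hb0 := qPoch_ne_zero hq b
    have hA : qBinom q (k + a) k ≠ 0 :=
      fun h => qPoch_ne_zero hq (k + a) (by rw [← ha, h, mul_zero])
    have hB : qBinom q (k + b) k ≠ 0 :=
      fun h => qPoch_ne_zero hq (k + b) (by rw [← hb, h, mul_zero])
    have hsign : ((-1 : ℂ) ^ k) ^ 2 = 1 := by rw [← pow_mul, pow_mul', neg_one_sq, one_pow]
    simp only [Nat.add_sub_cancel_left, eqExpCoeff, ← ha, ← hb]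
    field_simp
    linear_combination (-1) ^ a * (-1) ^ b * q ^ (k * (k - 1) / 2) * hsign

end QBinomial

section Reindex

variable {M : Type*} [CommSemiring M]

lemma sum_range_sum_range_mul_eq_sum_antidiagonal (d : ℕ) (g : ℕ → ℕ → M) (w : ℕ → M)
    (hw : ∀ s, d < s → w s = 0) :
    ∑ m ∈ range (d + 1), ∑ n ∈ range (d + 1), g m n * w (m + n)
      = ∑ s ∈ range (d + 1), (∑ p ∈ antidiagonal s, g p.1 p.2) * w s := by
  trans ∑ p ∈ range (d + 1) ×ˢ range (d + 1), g p.1 p.2 * w (p.1 + p.2)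
  · simp only [sum_product]
  trans ∑ x ∈ (range (d + 1)).sigma antidiagonal, g x.2.1 x.2.2 * w x.1
  swap
  · simp only [sum_sigma, sum_mul]
  refine sum_bij_ne_zero (fun p _ _ => ⟨p.1 + p.2, p⟩) (fun p _ hp => ?_)
    (fun p _ _ p' _ _ h => congrArg Sigma.snd h) (fun x hx hx0 => ?_) (fun _ _ _ => rfl)
  · have : p.1 + p.2 ≤ d := by
      by_contra h; exact hp (by rw [hw _ (by omega), mul_zero])
    simpa only [mem_sigma, mem_range, HasAntidiagonal.mem_antidiagonal, and_true] using
      Nat.lt_succ_of_le this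
  · obtain ⟨s, p⟩ := x
    simp only [mem_sigma, mem_range, HasAntidiagonal.mem_antidiagonal] at hx
    obtain ⟨hs, rfl⟩ := hx
    exact ⟨p, by simp only [mem_product, mem_range]; omega, hx0, rfl⟩

lemma sum_range_sum_range_sum_range_mul_eq (d : ℕ) (g : ℕ → ℕ → ℕ → M) (w : ℕ → ℕ → M)
    (hw : ∀ X Y, d < X + Y → w X Y = 0) :
    ∑ n ∈ range (d + 1), ∑ k ∈ range (d + 1), ∑ m ∈ range (d + 1), g n k m * w (n + k) (k + m)
      = ∑ X ∈ range (d + 1), ∑ Y ∈ range (d + 1),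
          (∑ k ∈ range (min X Y + 1), g (X - k) k (Y - k)) * w X Y := by
  trans ∑ p ∈ range (d + 1) ×ˢ (range (d + 1) ×ˢ range (d + 1)),
      g p.1 p.2.1 p.2.2 * w (p.1 + p.2.1) (p.2.1 + p.2.2)
  · simp only [sum_product]
  trans ∑ x ∈ (range (d + 1) ×ˢ range (d + 1)).sigma fun p => range (min p.1 p.2 + 1),
      g (x.1.1 - x.2) x.2 (x.1.2 - x.2) * w x.1.1 x.1.2
  swap
  · simp only [sum_sigma, sum_product, sum_mul]
  refine sum_bij_ne_zero (fun p _ _ => ⟨(p.1 + p.2.1, p.2.1 + p.2.2), p.2.1⟩) (fun p _ hp => ?_)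
    (fun p _ _ p' _ _ h => ?_) (fun x hx hx0 => ?_) (fun p _ _ => ?_)
  · have : p.1 + p.2.1 + (p.2.1 + p.2.2) ≤ d := by
      by_contra h; exact hp (by rw [hw _ _ (by omega), mul_zero])
    simp only [mem_sigma, mem_product, mem_range]
    omega
  · simp only [Sigma.mk.injEq, Prod.mk.injEq, heq_eq_eq] at h
    ext <;> omega
  · obtain ⟨⟨X, Y⟩, k⟩ := x
    simp only [mem_sigma, mem_product, mem_range] at hx
    obtain ⟨⟨hX, hY⟩, hk⟩ := hx
    have hkX : k ≤ X := (Nat.lt_succ_iff.1 hk).trans (min_le_left X Y)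
    have hkY : k ≤ Y := (Nat.lt_succ_iff.1 hk).trans (min_le_right X Y)
    refine ⟨(X - k, k, Y - k), by simp only [mem_product, mem_range]; omega, ?_, ?_⟩
    · simpa [Nat.sub_add_cancel hkX, Nat.add_sub_cancel' hkY] using hx0
    · simp only [Sigma.mk.injEq, Prod.mk.injEq, heq_eq_eq, and_true]; omega
  · simp

end Reindex

section QCommuting

variable {K M : Type*} [CommSemiring K] [Semiring M] [Algebra K M] {q : K} {a b : M}

lemma pow_mul_eq_smul_mul_pow (h : a * b = q • (b * a)) (n : ℕ) :
    a ^ n * b = q ^ n • (b * a ^ n) := by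
  induction n with
  | zero => simp
  | succ n ih =>
    rw [pow_succ, mul_assoc, h, mul_smul_comm, ← mul_assoc, ih, smul_mul_assoc, smul_smul,
      mul_assoc, ← pow_succ, ← pow_succ']

lemma pow_mul_pow_eq_smul_mul (h : a * b = q • (b * a)) (m n : ℕ) :
    a ^ m * b ^ n = q ^ (m * n) • (b ^ n * a ^ m) := by
  induction n with
  | zero => simp
  | succ n ih =>
    rw [pow_succ, ← mul_assoc, ih, smul_mul_assoc, mul_assoc, pow_mul_eq_smul_mul_pow h,
      mul_smul_comm, smul_smul, ← mul_assoc, ← pow_succ, ← pow_add, Nat.mul_succ]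

lemma mul_pow_eq_smul_pow_mul_pow (h : a * b = q • (b * a)) (k : ℕ) :
    (b * a) ^ k = q ^ (k * (k - 1) / 2) • (b ^ k * a ^ k) := by
  induction k with
  | zero => simp
  | succ k ih =>
    rw [pow_succ, ih, smul_mul_assoc, mul_assoc, ← mul_assoc (a ^ k), pow_mul_eq_smul_mul_pow h,
      smul_mul_assoc, mul_smul_comm, smul_smul, ← pow_add, ← Nat.triangle_succ, mul_assoc,
      ← mul_assoc (b ^ k), ← pow_succ, ← pow_succ]

end QCommuting

open MvPowerSeries

section OrderRaising

variable {σ R : Type*} [CommRing R]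

def RaisesOrderBy (s : ℕ) (T : Module.End R (MvPowerSeries σ R)) : Prop :=
  ∀ f, f.order + s ≤ (T f).order

namespace RaisesOrderBy

variable {s t : ℕ} {S T : Module.End R (MvPowerSeries σ R)}

lemma mul (hT : RaisesOrderBy s T) (hS : RaisesOrderBy t S) : RaisesOrderBy (t + s) (T * S) :=
  fun f => calc
    f.order + ↑(t + s) = f.order + t + s := by push_cast; rw [add_assoc]
    _ ≤ (S f).order + s := by gcongr; exact hS f
    _ ≤ (T (S f)).order := hT (S f)

lemma pow (hT : RaisesOrderBy s T) : ∀ n : ℕ, RaisesOrderBy (n * s) (T ^ n)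
  | 0 => fun f => by simp
  | n + 1 => by rw [pow_succ', Nat.succ_mul]; exact hT.mul (hT.pow n)

lemma mono (hT : RaisesOrderBy s T) (h : t ≤ s) : RaisesOrderBy t T :=
  fun f => (add_le_add le_rfl (by exact_mod_cast h)).trans (hT f)

lemma coeff_eq_zero (hT : RaisesOrderBy s T) (f : MvPowerSeries σ R) {ν : σ →₀ ℕ}
    (hν : ν.degree < s) : coeff ν (T f) = 0 :=
  coeff_of_lt_order <| (by exact_mod_cast hν : (ν.degree : ℕ∞) < s).trans_le
    (le_add_self.trans (hT f))

lemma coeff_eq_coeff (hT : RaisesOrderBy 0 T) {f g : MvPowerSeries σ R} {d : ℕ}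
    (hfg : ∀ μ : σ →₀ ℕ, μ.degree ≤ d → coeff μ f = coeff μ g) {ν : σ →₀ ℕ}
    (hν : ν.degree ≤ d) : coeff ν (T f) = coeff ν (T g) := by
  have h : ((d + 1 : ℕ) : ℕ∞) ≤ (f - g).order :=
    nat_le_order fun μ hμ => by rw [map_sub, hfg μ (by omega), sub_self]
  rw [← sub_eq_zero, ← map_sub, ← map_sub]
  exact coeff_of_lt_order <| (by exact_mod_cast Nat.lt_succ_of_le hν : (ν.degree : ℕ∞) < _).trans_le
    (h.trans (by simpa using hT (f - g)))

end RaisesOrderBy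

def powSer (c : ℕ → R) (T : Module.End R (MvPowerSeries σ R)) (f : MvPowerSeries σ R) :
    MvPowerSeries σ R :=
  fun ν => ∑ n ∈ range (ν.degree + 1), c n * coeff ν ((T ^ n) f)

variable {L S T : Module.End R (MvPowerSeries σ R)}

lemma coeff_powSer_of_degree_le (hT : RaisesOrderBy 1 T) (c : ℕ → R) (f : MvPowerSeries σ R)
    {ν : σ →₀ ℕ} {d : ℕ} (hν : ν.degree ≤ d) :
    coeff ν (powSer c T f) = ∑ n ∈ range (d + 1), c n * coeff ν ((T ^ n) f) :=
  sum_subset (range_subset_range.2 (by omega)) fun n _ hn => by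
    rw [(hT.pow n).coeff_eq_zero f (by simp only [mem_range] at hn; omega), mul_zero]

lemma coeff_apply_powSer (hL : RaisesOrderBy 0 L) (hT : RaisesOrderBy 1 T) (c : ℕ → R)
    (f : MvPowerSeries σ R) {ν : σ →₀ ℕ} {d : ℕ} (hν : ν.degree ≤ d) :
    coeff ν (L (powSer c T f)) = ∑ n ∈ range (d + 1), c n * coeff ν (L ((T ^ n) f)) := by
  rw [hL.coeff_eq_coeff (g := ∑ n ∈ range (d + 1), c n • (T ^ n) f) (fun μ hμ => ?_) hν]
  · simp
  · simp [coeff_powSer_of_degree_le hT c f hμ]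

lemma coeff_powSer_powSer (hS : RaisesOrderBy 1 S) (hT : RaisesOrderBy 1 T) (a b : ℕ → R)
    (f : MvPowerSeries σ R) {ν : σ →₀ ℕ} {d : ℕ} (hν : ν.degree ≤ d) :
    coeff ν (powSer a S (powSer b T f))
      = ∑ m ∈ range (d + 1), ∑ n ∈ range (d + 1), a m * b n * coeff ν ((S ^ m * T ^ n) f) := by
  rw [coeff_powSer_of_degree_le hS _ _ hν]
  refine sum_congr rfl fun m _ => ?_
  rw [coeff_apply_powSer ((hS.pow m).mono (Nat.zero_le _)) hT b f hν, mul_sum]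
  exact sum_congr rfl fun n _ => by rw [Module.End.mul_apply, mul_assoc]

end OrderRaising

section Exponentials

variable {σ : Type*} {A B : Module.End ℂ (MvPowerSeries σ ℂ)}

lemma powSer_comm (hA : RaisesOrderBy 1 A) (hB : RaisesOrderBy 1 B) (hAB : Commute A B)
    (a b : ℕ → ℂ) (f : MvPowerSeries σ ℂ) :
    powSer a A (powSer b B f) = powSer b B (powSer a A f) := by
  ext ν
  rw [coeff_powSer_powSer hA hB _ _ _ le_rfl, coeff_powSer_powSer hB hA _ _ _ le_rfl, sum_comm]
  exact sum_congr rfl fun n _ => sum_congr rfl fun m _ => by rw [(hAB.pow_pow m n).eq]; ring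

variable {q : ℂ} (hq : ∀ n : ℕ, 0 < n → q ^ n ≠ 1)
include hq

lemma powSer_eqExpCoeff_powSer_EqExpCoeff (hA : RaisesOrderBy 1 A) (f : MvPowerSeries σ ℂ) :
    powSer (eqExpCoeff q) A (powSer (EqExpCoeff q) A f) = f := by
  ext ν
  rw [coeff_powSer_powSer hA hA _ _ _ le_rfl]
  simp_rw [← pow_add]
  rw [sum_range_sum_range_mul_eq_sum_antidiagonal _ (fun m n => eqExpCoeff q m * EqExpCoeff q n)
    (fun s => coeff ν ((A ^ s) f)) fun s hs => (hA.pow s).coeff_eq_zero f (by omega)]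
  simp [sum_antidiagonal_eqExpCoeff_mul_EqExpCoeff hq]

lemma powSer_eqExpCoeff_pentagon (hA : RaisesOrderBy 1 A) (hB : RaisesOrderBy 1 B)
    (hAB : A * B = q • (B * A)) (f : MvPowerSeries σ ℂ) :
    powSer (eqExpCoeff q) A (powSer (eqExpCoeff q) B f)
      = powSer (eqExpCoeff q) B (powSer (eqExpCoeff q) (B * A) (powSer (eqExpCoeff q) A f)) := by
  ext ν
  set d := ν.degree
  set w : ℕ → ℕ → ℂ := fun X Y => coeff ν ((B ^ X * A ^ Y) f)
  have hw : ∀ X Y, d < X + Y → w X Y = 0 := fun X Y h =>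
    ((hB.pow X).mul (hA.pow Y)).coeff_eq_zero f (by omega)
  have hBA : RaisesOrderBy 1 (B * A) := (hB.mul hA).mono (by omega)
  have lhs : coeff ν (powSer (eqExpCoeff q) A (powSer (eqExpCoeff q) B f))
      = ∑ X ∈ range (d + 1), ∑ Y ∈ range (d + 1),
          eqExpCoeff q X * eqExpCoeff q Y * q ^ (X * Y) * w X Y := by
    rw [coeff_powSer_powSer hA hB _ _ _ le_rfl, sum_comm]
    refine sum_congr rfl fun X _ => sum_congr rfl fun Y _ => ?_
    rw [pow_mul_pow_eq_smul_mul hAB, LinearMap.smul_apply, map_smul, smul_eq_mul, mul_comm Y X]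
    ring
  have rhs : coeff ν (powSer (eqExpCoeff q) B
        (powSer (eqExpCoeff q) (B * A) (powSer (eqExpCoeff q) A f)))
      = ∑ n ∈ range (d + 1), ∑ k ∈ range (d + 1), ∑ m ∈ range (d + 1),
          eqExpCoeff q n * (eqExpCoeff q k * q ^ (k * (k - 1) / 2)) * eqExpCoeff q m
            * w (n + k) (k + m) := by
    rw [coeff_powSer_of_degree_le hB _ _ le_rfl]
    refine sum_congr rfl fun n _ => ?_
    rw [coeff_apply_powSer ((hB.pow n).mono (Nat.zero_le _)) hBA _ _ le_rfl, mul_sum]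
    refine sum_congr rfl fun k _ => ?_
    rw [← Module.End.mul_apply, coeff_apply_powSer (((hB.pow n).mul (hBA.pow k)).mono
      (Nat.zero_le _)) hA _ _ le_rfl, mul_sum, mul_sum]
    refine sum_congr rfl fun m _ => ?_
    rw [← Module.End.mul_apply, mul_pow_eq_smul_pow_mul_pow hAB, mul_smul_comm, smul_mul_assoc,
      LinearMap.smul_apply, map_smul, smul_eq_mul,
      show B ^ n * (B ^ k * A ^ k) * A ^ m = B ^ (n + k) * A ^ (k + m) by
        simp only [pow_add, mul_assoc]]
    ring
  rw [lhs, rhs, sum_range_sum_range_sum_range_mul_eq d _ w hw]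
  exact sum_congr rfl fun X _ => sum_congr rfl fun Y _ => by
    rw [eqExpCoeff_mul_eqExpCoeff_mul_pow hq]

end Exponentials

section XMulRescale

variable {σ R : Type*} [CommRing R]

lemma rescale_X (a : σ → R) (j : σ) : rescale a (X j) = a j • X j := by
  ext ν
  rw [coeff_rescale, coeff_smul, coeff_X]
  split_ifs with h
  · subst h; simp
  · simp

lemma coeff_rescale_mulSingle [DecidableEq σ] (k : σ) (c : R) (f : MvPowerSeries σ R)
    (ν : σ →₀ ℕ) : coeff ν (rescale (Pi.mulSingle k c) f) = c ^ ν k * coeff ν f := by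
  rw [coeff_rescale, Finsupp.prod, prod_eq_single k (fun j _ hj => by simp [hj])
    (fun hk => by simp [Finsupp.notMem_support_iff.1 hk]), Pi.mulSingle_eq_same]

lemma order_le_order_rescale (a : σ → R) (f : MvPowerSeries σ R) :
    f.order ≤ (rescale a f).order :=
  le_order fun ν hν => by rw [coeff_rescale, coeff_of_lt_order hν, mul_zero]

def xMulRescale (i : σ) (a : σ → R) : Module.End R (MvPowerSeries σ R) :=
  LinearMap.mulLeft R (X i) * (rescaleAlgHom a).toLinearMap

lemma xMulRescale_apply (i : σ) (a : σ → R) (f : MvPowerSeries σ R) :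
    xMulRescale i a f = X i * rescale a f := by
  simp [xMulRescale, rescaleAlgHom_apply]

lemma raisesOrderBy_xMulRescale (i : σ) (a : σ → R) : RaisesOrderBy 1 (xMulRescale i a) :=
  fun f => by
    rw [xMulRescale_apply, add_comm]
    exact (add_le_add ((one_le_order_iff_constCoeff_eq_zero).2 (constantCoeff_X i))
      (order_le_order_rescale a f)).trans le_order_mul

lemma smul_xMulRescale_mul_xMulRescale (i j : σ) (a b : σ → R) :
    b i • (xMulRescale i a * xMulRescale j b) = a j • (xMulRescale j b * xMulRescale i a) := by
  ext f : 1
  simp only [LinearMap.smul_apply, Module.End.mul_apply, xMulRescale_apply, map_mul, rescale_X,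
    rescale_rescale, smul_mul_assoc, mul_smul_comm, smul_smul, mul_comm b a, mul_comm (b i)]
  rw [mul_left_comm (X i)]

end XMulRescale

section Xcheck

variable (q : ℂ)

lemma eqExp_eq_powSer (T : Module.End ℂ (MvPowerSeries (ZMod N) ℂ)) :
    eqExp q ⇑T = powSer (eqExpCoeff q) T := by
  funext f ν
  simp only [eqExp, powSer, Module.End.coe_pow]
  rfl

lemma EqExp_eq_powSer (T : Module.End ℂ (MvPowerSeries (ZMod N) ℂ)) :
    EqExp q ⇑T = powSer (EqExpCoeff q) T := by
  funext f ν
  simp only [EqExp, powSer, Module.End.coe_pow]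
  rfl

def xcheckScale (i : ZMod N) : ZMod N → ℂ := Pi.mulSingle (i - 1) q * Pi.mulSingle i q⁻¹

def xcheckLin (i : ZMod N) : Module.End ℂ (MvPowerSeries (ZMod N) ℂ) :=
  xMulRescale i (xcheckScale q i)

lemma coe_xcheckLin (i : ZMod N) : ⇑(xcheckLin q i) = xcheck q i := by
  funext f
  have hp : ∀ (k : ZMod N) (g : MvPowerSeries (ZMod N) ℂ),
      pmap q k g = rescale (Pi.mulSingle k q) g :=
    fun k g => by ext ν; rw [coeff_rescale_mulSingle]; rfl
  have hpinv : ∀ (k : ZMod N) (g : MvPowerSeries (ZMod N) ℂ),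
      pinv q k g = rescale (Pi.mulSingle k q⁻¹) g :=
    fun k g => by ext ν; rw [coeff_rescale_mulSingle, inv_pow, ← zpow_natCast, ← zpow_neg]; rfl
  rw [xcheckLin, xMulRescale_apply, xcheck, hp, hpinv, rescale_rescale, xcheckScale]

variable {q}

lemma raisesOrderBy_xcheckLin (i : ZMod N) : RaisesOrderBy 1 (xcheckLin q i) :=
  raisesOrderBy_xMulRescale _ _

lemma xcheckScale_apply_of_ne {i j : ZMod N} (h1 : j ≠ i) (h2 : j ≠ i - 1) :
    xcheckScale q i j = 1 := by
  simp [xcheckScale, h1, h2]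

lemma xcheckScale_apply_sub_one {i : ZMod N} (h : i - 1 ≠ i) : xcheckScale q i (i - 1) = q := by
  simp [xcheckScale, h]

lemma xcheckLin_commute {i j : ZMod N} (h1 : i ≠ j) (h2 : i ≠ j - 1) (h3 : j ≠ i - 1) :
    Commute (xcheckLin q i) (xcheckLin q j) := by
  have h := smul_xMulRescale_mul_xMulRescale i j (xcheckScale q i) (xcheckScale q j)
  rwa [xcheckScale_apply_of_ne h1 h2, xcheckScale_apply_of_ne h1.symm h3, one_smul,
    one_smul] at h

lemma xcheckLin_add_one_mul (h1 : (1 : ZMod N) ≠ 0) (h2 : (2 : ZMod N) ≠ 0) (i : ZMod N) :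
    xcheckLin q (i + 1) * xcheckLin q i = q • (xcheckLin q i * xcheckLin q (i + 1)) := by
  have h := smul_xMulRescale_mul_xMulRescale (i + 1) i (xcheckScale q (i + 1)) (xcheckScale q i)
  have hscale : xcheckScale q (i + 1) i = q := by
    have := xcheckScale_apply_sub_one (q := q) (i := i + 1) (by simpa using h1)
    rwa [add_sub_cancel_right] at this
  rwa [xcheckScale_apply_of_ne (by simpa using h1) (by intro h; apply h2; linear_combination h),
    one_smul, hscale] at h

end Xcheck

lemma compAsc_comm {α : Type*} {F : ℕ → α → α} {G : α → α} {t : ℕ}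
    (h : ∀ j < t, G ∘ F j = F j ∘ G) : G ∘ compAsc F t = compAsc F t ∘ G := by
  induction t with
  | zero => rfl
  | succ t ih =>
    change G ∘ compAsc F t ∘ F t = compAsc F t ∘ F t ∘ G
    rw [← Function.comp_assoc, ih fun j hj => h j (by omega), Function.comp_assoc,
      h t t.lt_succ_self]

section Words

variable {q : ℂ}

lemma natCast_ne_natCast {a b : ℕ} (ha : a < N) (hb : b < N) (h : a ≠ b) :
    (a : ZMod N) ≠ b := by
  rwa [Ne, ZMod.natCast_eq_natCast_iff', Nat.mod_eq_of_lt ha, Nat.mod_eq_of_lt hb]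

lemma natCast_ne_natCast_sub_one {a b : ℕ} (ha : a + 1 < N) (hb : b < N) (h : a + 1 ≠ b) :
    (a : ZMod N) ≠ b - 1 :=
  fun h' => natCast_ne_natCast ha hb h (by push_cast; rw [h']; ring)

variable (q) in
def xcheckWord (t : ℕ) : Module.End ℂ (MvPowerSeries (ZMod N) ℂ) :=
  ((List.range t).map fun m : ℕ => xcheckLin q (m : ZMod N)).prod

lemma xcheckWord_succ (t : ℕ) : xcheckWord q (t + 1) = xcheckWord q t * xcheckLin q (t : ZMod N) :=
  List.prod_range_succ _ _

lemma coe_xcheckWord (t : ℕ) :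
    ⇑(xcheckWord (N := N) q t) = compAsc (fun m => xcheck q (m : ℕ)) t := by
  induction t with
  | zero => simp [xcheckWord, compAsc, Module.End.coe_one]
  | succ t ih => rw [xcheckWord_succ, Module.End.coe_mul, ih, coe_xcheckLin]; rfl

lemma raisesOrderBy_xcheckWord (t : ℕ) : RaisesOrderBy t (xcheckWord (N := N) q t) := by
  induction t with
  | zero => intro f; simp [xcheckWord]
  | succ t ih => rw [xcheckWord_succ, add_comm]; exact ih.mul (raisesOrderBy_xcheckLin _)

lemma commute_xcheckLin_xcheckWord {k t : ℕ} (hkN : k + 3 ≤ N) (ht : t ≤ k) :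
    Commute (xcheckLin q ((k + 1 : ℕ) : ZMod N)) (xcheckWord q t) :=
  Commute.list_prod_right _ _ fun x hx => by
    obtain ⟨m, hm, rfl⟩ := List.mem_map.1 hx
    rw [List.mem_range] at hm
    exact xcheckLin_commute (natCast_ne_natCast (by omega) (by omega) (by omega))
      (natCast_ne_natCast_sub_one (by omega) (by omega) (by omega))
      (natCast_ne_natCast_sub_one (by omega) (by omega) (by omega))

lemma xcheckLin_mul_xcheckWord {k : ℕ} (hkN : k + 3 ≤ N) :
    xcheckLin q ((k + 1 : ℕ) : ZMod N) * xcheckWord q (k + 1)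
      = q • (xcheckWord q (k + 1) * xcheckLin q ((k + 1 : ℕ) : ZMod N)) := by
  have h1 : (1 : ZMod N) ≠ 0 := by
    exact_mod_cast natCast_ne_natCast (a := 1) (b := 0) (by omega) (by omega) one_ne_zero
  have h2 : (2 : ZMod N) ≠ 0 := by
    exact_mod_cast natCast_ne_natCast (a := 2) (b := 0) (by omega) (by omega) two_ne_zero
  rw [xcheckWord_succ, ← mul_assoc, (commute_xcheckLin_xcheckWord hkN le_rfl).eq, mul_assoc,
    Nat.cast_succ, xcheckLin_add_one_mul h1 h2, mul_smul_comm, mul_assoc]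

end Words

section Assembly

variable {q : ℂ}

lemma eqExp_comp_compAsc_comp_EqExp (hq : ∀ n : ℕ, 0 < n → q ^ n ≠ 1) {k : ℕ}
    (hkN : k + 3 ≤ N) :
    eqExp q (xcheck (N := N) q (k + 1 : ℕ))
      ∘ compAsc (fun j => eqExp q (compAsc (fun m => xcheck (N := N) q (m : ℕ)) (j + 1))) (k + 1)
      ∘ EqExp q (xcheck (N := N) q (k + 1 : ℕ))
    = compAsc (fun j => eqExp q (compAsc (fun m => xcheck (N := N) q (m : ℕ)) (j + 1)))
        (k + 2) := by
  set A := xcheckLin (N := N) q (k + 1 : ℕ)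
  set P : ℕ → MvPowerSeries (ZMod N) ℂ → MvPowerSeries (ZMod N) ℂ :=
    fun j => powSer (eqExpCoeff q) (xcheckWord q (j + 1))
  have hA : RaisesOrderBy 1 A := raisesOrderBy_xcheckLin _
  have hP : (fun j => eqExp q (compAsc (fun m => xcheck (N := N) q (m : ℕ)) (j + 1))) = P :=
    funext fun j => by rw [← coe_xcheckWord, eqExp_eq_powSer]
  have hcomm : powSer (eqExpCoeff q) A ∘ compAsc P k = compAsc P k ∘ powSer (eqExpCoeff q) A :=
    compAsc_comm fun j hj => funext <| powSer_comm hA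
      ((raisesOrderBy_xcheckWord (j + 1)).mono (by omega))
      (commute_xcheckLin_xcheckWord hkN (by omega)) _ _
  rw [hP, ← coe_xcheckLin, eqExp_eq_powSer, EqExp_eq_powSer]
  funext f
  change (powSer (eqExpCoeff q) A ∘ compAsc P k) (P k _) = compAsc P k (P k (P (k + 1) f))
  rw [hcomm, Function.comp_apply, powSer_eqExpCoeff_pentagon hq hA
    ((raisesOrderBy_xcheckWord (k + 1)).mono (by omega)) (xcheckLin_mul_xcheckWord hkN),
    powSer_eqExpCoeff_powSer_EqExpCoeff hq hA, ← xcheckWord_succ]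

lemma adjoint_reduction_of_le (hq : ∀ n : ℕ, 0 < n → q ^ n ≠ 1) :
    ∀ k, k + 2 ≤ N →
    (compDesc (fun j => eqExp q (xcheck (N := N) q (j + 1 : ℕ))) k)
      ∘ eqExp q (xcheck (N := N) q 0)
      ∘ (compAsc (fun j => EqExp q (xcheck (N := N) q (j + 1 : ℕ))) k)
    = compAsc (fun j =>
        eqExp q (compAsc (fun m => xcheck (N := N) q (m : ℕ)) (j + 1))) (k + 1)
  | 0, _ => by simp [compAsc, compDesc]
  | k + 1, hk => by
    change eqExp q _ ∘ (compDesc _ k ∘ eqExp q _ ∘ compAsc _ k) ∘ EqExp q _ = _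
    rw [adjoint_reduction_of_le hq k (by omega)]
    exact eqExp_comp_compAsc_comp_EqExp hq hk

end Assembly

end AdjointReduction

theorem adjoint_reduction_general (q : ℂ) (hq : ∀ n : ℕ, 0 < n → q ^ n ≠ 1)
    (N : ℕ) (hN : 3 ≤ N) :
    (compDesc (fun j => eqExp q (xcheck (N := N) q (j + 1 : ℕ))) (N - 2))
      ∘ eqExp q (xcheck (N := N) q 0)
      ∘ (compAsc (fun j => EqExp q (xcheck (N := N) q (j + 1 : ℕ))) (N - 2))
    = compAsc (fun j =>
        eqExp q (compAsc (fun m => xcheck (N := N) q (m : ℕ)) (j + 1))) (N - 1) := by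
  rw [show N - 1 = N - 2 + 1 by omega]
  exact AdjointReduction.adjoint_reduction_of_le hq (N - 2) (by omega)

/-- **Lemma 2.2**: for `N ≥ 3`,
`e_q(−x̌_{N−2}) ∘ ⋯ ∘ e_q(−x̌_1) ∘ e_q(−x̌_0) ∘ e_q(−x̌_1)⁻¹ ∘ ⋯ ∘ e_q(−x̌_{N−2})⁻¹
 = e_q(−x̌_0) ∘ e_q(−x̌_0∘x̌_1) ∘ ⋯ ∘ e_q(−x̌_0∘x̌_1∘⋯∘x̌_{N−2})`,
where `e_q(−x̌_j)⁻¹ = E_q(x̌_j)`. -/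
theorem adjoint_reduction (q : ℂ) (hq0 : q ≠ 0) (hq : ∀ n : ℕ, 0 < n → q ^ n ≠ 1)
    (N : ℕ) [NeZero N] (hN : 3 ≤ N) :
    (compDesc (fun j => eqExp q (xcheck (N := N) q (j + 1 : ℕ))) (N - 2))
      ∘ eqExp q (xcheck (N := N) q 0)
      ∘ (compAsc (fun j => EqExp q (xcheck (N := N) q (j + 1 : ℕ))) (N - 2))
    = compAsc (fun j =>
        eqExp q (compAsc (fun m => xcheck (N := N) q (m : ℕ)) (j + 1))) (N - 1) :=
  adjoint_reduction_general q hq N hN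
end
end

section
/- (Proposition 2.3: equivalence of the simple-root and higher-root factorized forms.) Let N ≥ 3. Define G_L := E_q(x̌_1) ∘ E_q(x̌_2) ∘ ⋯ ∘ E_q(x̌_{N−2}), A_L^{(s)} := G_L^{−1} ∘ e_q(−x̌_0) ∘ G_L ∘ e_q(−x̌_{N−1}) ∘ ⋯ ∘ e_q(−x̌_2) ∘ e_q(−x̌_1) ∘ M_{φ(Λ)}, and A_L^{(h)} := e_q(−x̌_0) ∘ e_q(−x̌_0∘x̌_1) ∘ ⋯ ∘ e_q(−x̌_0∘x̌_1∘⋯∘x̌_{N−2}) ∘ e_q(−x̌_{N−1}) ∘ ⋯ ∘ e_q(−x̌_1) ∘ M_{φ(Λ)}. Further, with D := ∏_{i∈ℤ/Nℤ} α_i, define G_R := E_q(x̂_{N−2}) ∘ ⋯ ∘ E_q(x̂_1), A_R^{(s)} := M_{φ(q^{1−N}DΛ)} ∘ e_q(−x̂_1) ∘ ⋯ ∘ e_q(−x̂_{N−1}) ∘ G_R ∘ e_q(−x̂_0) ∘ G_R^{−1}, and A_R^{(h)} := M_{φ(q^{1−N}DΛ)} ∘ e_q(−x̂_1) ∘ ⋯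 ∘ e_q(−x̂_{N−1}) ∘ e_q(−x̂_{N−2}∘⋯∘x̂_1∘x̂_0) ∘ ⋯ ∘ e_q(−x̂_1∘x̂_0) ∘ e_q(−x̂_0). Then A_L^{(s)} = A_L^{(h)} and A_R^{(s)} = A_R^{(h)}. -/
/-!
Proposition 2.3: equivalence of the simple-root and higher-root factorized
forms of the blocks `A_L` and `A_R` of the non-stationary affine gl_N
Hamiltonian.  Setting as in the paper: `V = MvPowerSeries (ZMod N) ℂ`,
`p i : x^ν ↦ q^{ν_i} x^ν`, `x̌_i = M_{x_i} ∘ p_i⁻¹ ∘ p_{i−1}`,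
`x̂_i = M_{α_i x_i} ∘ p_i ∘ p_{i−1}⁻¹`, and for degree-raising `T`,
`e_q(−T) = ∑ (−1)ⁿTⁿ/(q;q)_n`, `E_q(T) = ∑ q^{n(n−1)/2}Tⁿ/(q;q)_n = e_q(−T)⁻¹`,
defined by their (finite) coefficientwise sums.  `φ(w) = (w;q)_∞` as a formal
power series, `Λ = ∏ x_i`, `D = ∏ α_i`.
-/

noncomputable section
open scoped Classical

variable {N : ℕ}

/-- `x̂_i := M_{α_i x_i} ∘ p_i ∘ p_{i−1}⁻¹`. -/
def xhat (q : ℂ) (α : ZMod N → ℂ) (i : ZMod N) (f : MvPowerSeries (ZMod N) ℂ) :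
    MvPowerSeries (ZMod N) ℂ :=
  α i • (MvPowerSeries.X i * pmap q i (pinv q (i - 1) f))

/-- the power series `φ(c·Λ) = ∑_n (−1)ⁿ q^{n(n−1)/2} cⁿ Λⁿ/(q;q)_n`, where
`Λ = ∏_{i∈ℤ/N} x_i`: its coefficient at `ν` is nonzero only for constant `ν`. -/
def phiLam (q c : ℂ) : MvPowerSeries (ZMod N) ℂ :=
  fun ν => if ∀ i : ZMod N, ν i = ν 0 then
    ((-1 : ℂ) ^ (ν 0) * q ^ (ν 0 * (ν 0 - 1) / 2) * c ^ (ν 0) / qPoch q (ν 0)) else 0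


/-!
Both identities rest on the `q`-pentagon identity
`e_q(−B) e_q(−A) E_q(B) = e_q(−A) e_q(−AB)` for degree-raising `A`, `B` with `BA = qAB`;
comparing coefficients of `AᵇBʲ` reduces it to a form of the `q`-binomial theorem.
Conjugate `e_q(−x̌₀)` successively by `E_q(x̌₁), …, E_q(x̌_{N−2})`: the new generator `x̌_{k+1}`
commutes with every earlier factor `e_q(−x̌₀⋯x̌ᵢ)`, `i < k`, and `q`-commutes with `x̌₀⋯x̌ₖ`, so one
pentagon step produces the next factor `e_q(−x̌₀⋯x̌_{k+1})`. The right block is the mirror image and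
uses the pentagon in the form `E_q(B) e_q(−A) e_q(−B) = e_q(−BA) e_q(−A)`, which follows from the
first one because `E_q(T)` inverts `e_q(−T)`.
-/

open Finset MvPowerSeries

lemma sum_range_sum_range_eq_sum_antidiagonal {β : Type*} [AddCommMonoid β] {M : ℕ}
    (F : ℕ → ℕ → β) (hF : ∀ a b, M ≤ a + b → F a b = 0) :
    ∑ a ∈ range M, ∑ b ∈ range M, F a b = ∑ j ∈ range M, ∑ p ∈ antidiagonal j, F p.1 p.2 := by
  simp_rw [Nat.sum_antidiagonal_eq_sum_range_succ F, sum_range_diag_flip]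
  refine sum_congr rfl fun a ha => (sum_subset (range_subset_range.mpr (by omega)) ?_).symm
  intro b _ hb
  simp only [mem_range] at ha hb
  exact hF a b (by omega)

lemma qPoch_succ (q : ℂ) (n : ℕ) : qPoch q (n + 1) = qPoch q n * (1 - q ^ (n + 1)) :=
  prod_range_succ _ _

section QCoefficients

variable {q : ℂ}

def eqCoeff (q : ℂ) (n : ℕ) : ℂ := (-1) ^ n / qPoch q n

def EqCoeff (q : ℂ) (n : ℕ) : ℂ := q ^ (n * (n - 1) / 2) / qPoch q n

@[simp] lemma eqCoeff_zero : eqCoeff q 0 = 1 := by simp [eqCoeff, qPoch]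

@[simp] lemma EqCoeff_zero : EqCoeff q 0 = 1 := by simp [EqCoeff, qPoch]

variable (hq : ∀ n : ℕ, 0 < n → q ^ n ≠ 1)
include hq

lemma one_sub_pow_ne_zero {n : ℕ} (hn : 0 < n) : 1 - q ^ n ≠ 0 :=
  sub_ne_zero.mpr (hq n hn).symm

lemma qPoch_ne_zero (n : ℕ) : qPoch q n ≠ 0 :=
  prod_ne_zero_iff.mpr fun k _ => one_sub_pow_ne_zero hq k.succ_pos

lemma eqCoeff_succ_mul (n : ℕ) : eqCoeff q (n + 1) * (1 - q ^ (n + 1)) = -eqCoeff q n := by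
  have := one_sub_pow_ne_zero hq n.succ_pos
  have := qPoch_ne_zero hq n
  rw [eqCoeff, eqCoeff, qPoch_succ]
  field_simp
  ring

lemma EqCoeff_succ_mul (n : ℕ) :
    EqCoeff q (n + 1) * (1 - q ^ (n + 1)) = q ^ n * EqCoeff q n := by
  have := one_sub_pow_ne_zero hq n.succ_pos
  have := qPoch_ne_zero hq n
  rw [EqCoeff, EqCoeff, qPoch_succ, Nat.triangle_succ, pow_add]
  field_simp

lemma sum_antidiagonal_eqCoeff_mul_EqCoeff (j b : ℕ) :
    (∑ p ∈ antidiagonal j, eqCoeff q p.1 * EqCoeff q p.2 * q ^ (p.1 * b)) * eqCoeff q b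
      = if j ≤ b then eqCoeff q (b - j) * eqCoeff q j * q ^ (j * (j - 1) / 2) else 0 := by
  induction j with
  | zero => simp
  | succ j ih =>
    have hrec : (1 - q ^ (j + 1)) *
        ∑ p ∈ antidiagonal (j + 1), eqCoeff q p.1 * EqCoeff q p.2 * q ^ (p.1 * b)
        = (q ^ j - q ^ b) *
          ∑ p ∈ antidiagonal j, eqCoeff q p.1 * EqCoeff q p.2 * q ^ (p.1 * b) := by
      -- split `1 - q ^ (j + 1) = q ^ a * (1 - q ^ c) + (1 - q ^ a)` for `a + c = j + 1`
      have hsplit : ∀ p ∈ antidiagonal (j + 1),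
          (1 - q ^ (j + 1)) * (eqCoeff q p.1 * EqCoeff q p.2 * q ^ (p.1 * b))
            = q ^ p.1 * (EqCoeff q p.2 * (1 - q ^ p.2)) * eqCoeff q p.1 * q ^ (p.1 * b)
              + eqCoeff q p.1 * (1 - q ^ p.1) * EqCoeff q p.2 * q ^ (p.1 * b) := by
        intro p hp
        rw [← mem_antidiagonal.mp hp, pow_add]
        ring
      rw [mul_sum, sum_congr rfl hsplit, sum_add_distrib, Nat.sum_antidiagonal_succ',
        Nat.sum_antidiagonal_succ]
      simp only [pow_zero, sub_self, mul_zero, zero_mul, zero_add, mul_sum, ← sum_add_distrib]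
      refine sum_congr rfl fun p hp => ?_
      rw [EqCoeff_succ_mul hq, eqCoeff_succ_mul hq, ← mem_antidiagonal.mp hp]
      ring
    apply mul_left_cancel₀ (one_sub_pow_ne_zero hq j.succ_pos)
    rw [← mul_assoc, hrec, mul_assoc, ih]
    by_cases hjb : j + 1 ≤ b
    · obtain ⟨c, rfl⟩ := Nat.exists_eq_add_of_le hjb
      rw [if_pos (by omega), if_pos hjb, show j + 1 + c - j = c + 1 by omega,
        Nat.add_sub_cancel_left, Nat.triangle_succ, pow_add, pow_add, pow_add]
      linear_combination (q ^ j * eqCoeff q j * q ^ (j * (j - 1) / 2)) * eqCoeff_succ_mul hq c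
        - (eqCoeff q c * q ^ (j * (j - 1) / 2) * q ^ j) * eqCoeff_succ_mul hq j
    · rw [if_neg hjb]
      split_ifs with hj
      · rw [show j = b by omega, sub_self, zero_mul, mul_zero]
      · simp

lemma sum_antidiagonal_EqCoeff_mul_eqCoeff (j : ℕ) :
    ∑ p ∈ antidiagonal j, EqCoeff q p.1 * eqCoeff q p.2 = if j = 0 then 1 else 0 := by
  have := sum_antidiagonal_eqCoeff_mul_EqCoeff hq j 0
  rw [← Nat.sum_antidiagonal_swap]
  simp only [mul_zero, pow_zero, mul_one, eqCoeff_zero, nonpos_iff_eq_zero] at this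
  simp only [Prod.fst_swap, Prod.snd_swap, mul_comm (EqCoeff q _), this]
  split_ifs with hj <;> simp [hj]

end QCoefficients

section Compositions

variable {α : Type*}

lemma compAsc_succ' (F : ℕ → α → α) (k : ℕ) :
    compAsc F (k + 1) = F 0 ∘ compAsc (fun j => F (j + 1)) k := by
  induction k with
  | zero => rfl
  | succ k ih =>
    change compAsc F (k + 1) ∘ F (k + 1) = _
    rw [ih]
    rfl

lemma compDesc_one (F : ℕ → α → α) : compDesc F 1 = F 0 := rfl

lemma compDesc_succ_eq_compAsc (F : ℕ → α → α) (k : ℕ) :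
    compDesc F (k + 1) = compAsc (fun j => F (k - j)) k ∘ F 0 := by
  induction k with
  | zero => rfl
  | succ k ih =>
    change F (k + 1) ∘ compDesc F (k + 1) = _
    rw [ih, compAsc_succ']
    simp only [Nat.sub_zero, Nat.add_sub_add_right]
    rfl

lemma Function.Commute.compAsc {f : α → α} {F : ℕ → α → α} {k : ℕ}
    (h : ∀ i < k, Function.Commute f (F i)) : Function.Commute f (compAsc F k) := by
  induction k with
  | zero => exact fun _ => rfl
  | succ k ih => exact (ih fun i hi => h i (by omega)).comp_right (h k (by omega))

lemma Function.Commute.compDesc {f : α → α} {F : ℕ → α → α} {k : ℕ}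
    (h : ∀ i < k, Function.Commute f (F i)) : Function.Commute f (compDesc F k) := by
  induction k with
  | zero => exact fun _ => rfl
  | succ k ih => exact (h k (by omega)).comp_right (ih fun i hi => h i (by omega))

end Compositions

section RaisingOperators

variable {σ : Type*}

lemma MvPowerSeries.smul_apply (c : ℂ) (f : MvPowerSeries σ ℂ) (ν : σ →₀ ℕ) :
    (c • f) ν = c * f ν := rfl

lemma MvPowerSeries.sum_smul_apply {ι : Type*} (s : Finset ι) (c : ι → ℂ)
    (g : ι → MvPowerSeries σ ℂ) (ν : σ →₀ ℕ) :
    (∑ i ∈ s, c i • g i) ν = ∑ i ∈ s, c i * g i ν := by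
  change coeff ν (∑ i ∈ s, c i • g i) = ∑ i ∈ s, c i * coeff ν (g i)
  simp [map_sum]

structure IsRaisingOp (n : ℕ) (T : MvPowerSeries σ ℂ → MvPowerSeries σ ℂ) : Prop where
  isLinearMap : IsLinearMap ℂ T
  order_add_le : ∀ f, f.order + n ≤ (T f).order

namespace IsRaisingOp

variable {m n : ℕ} {S T : MvPowerSeries σ ℂ → MvPowerSeries σ ℂ}

lemma id : IsRaisingOp 0 (id : MvPowerSeries σ ℂ → MvPowerSeries σ ℂ) :=
  ⟨LinearMap.id.isLinear, fun f => by simp⟩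

lemma comp (hS : IsRaisingOp m S) (hT : IsRaisingOp n T) : IsRaisingOp (n + m) (S ∘ T) where
  isLinearMap :=
    ((IsLinearMap.mk' S hS.isLinearMap).comp (IsLinearMap.mk' T hT.isLinearMap)).isLinear
  order_add_le f := by
    calc f.order + ↑(n + m) = f.order + n + m := by push_cast; rw [add_assoc]
      _ ≤ (T f).order + m := by gcongr; exact hT.order_add_le f
      _ ≤ (S (T f)).order := hS.order_add_le _

lemma mono (h : m ≤ n) (hT : IsRaisingOp n T) : IsRaisingOp m T :=
  ⟨hT.isLinearMap, fun f => le_trans (by gcongr) (hT.order_add_le f)⟩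

lemma iterate (hT : IsRaisingOp n T) (k : ℕ) : IsRaisingOp (k * n) T^[k] := by
  induction k with
  | zero => simpa using IsRaisingOp.id
  | succ k ih =>
    rw [Function.iterate_succ', add_one_mul]
    exact hT.comp ih

lemma compAsc {x : ℕ → MvPowerSeries σ ℂ → MvPowerSeries σ ℂ} (hx : ∀ i, IsRaisingOp n (x i))
    (k : ℕ) : IsRaisingOp (k * n) (compAsc x k) := by
  induction k with
  | zero => rw [zero_mul]; exact IsRaisingOp.id
  | succ k ih => rw [add_one_mul, add_comm]; exact ih.comp (hx k)

lemma compDesc {x : ℕ → MvPowerSeries σ ℂ → MvPowerSeries σ ℂ} (hx : ∀ i, IsRaisingOp n (x i))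
    (k : ℕ) : IsRaisingOp (k * n) (compDesc x k) := by
  induction k with
  | zero => rw [zero_mul]; exact IsRaisingOp.id
  | succ k ih => rw [add_one_mul]; exact (hx k).comp ih

lemma apply_eq_zero (hT : IsRaisingOp n T) (f : MvPowerSeries σ ℂ) {ν : σ →₀ ℕ}
    (hν : ν.degree < n) : T f ν = 0 :=
  coeff_of_lt_order <| (ENat.natCast_lt_natCast.mpr hν).trans_le <|
    le_add_self.trans (hT.order_add_le f)

lemma map_smul (hT : IsRaisingOp n T) (c : ℂ) (f : MvPowerSeries σ ℂ) : T (c • f) = c • T f :=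
  hT.isLinearMap.map_smul c f

lemma map_sum_smul (hT : IsRaisingOp n T) {ι : Type*} (s : Finset ι) (c : ι → ℂ)
    (g : ι → MvPowerSeries σ ℂ) : T (∑ i ∈ s, c i • g i) = ∑ i ∈ s, c i • T (g i) := by
  have := map_sum (IsLinearMap.mk' T hT.isLinearMap) (fun i => c i • g i) s
  simpa only [IsLinearMap.mk'_apply, hT.isLinearMap.map_smul] using this

end IsRaisingOp

/-- `∑ₙ cₙ Tⁿ f`, each coefficient summed only up to its own degree: this is the honest sum
when `T` raises the order (`opSeries_apply_eq_sum`). -/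
def opSeries (c : ℕ → ℂ) (T : MvPowerSeries σ ℂ → MvPowerSeries σ ℂ) (f : MvPowerSeries σ ℂ) :
    MvPowerSeries σ ℂ :=
  fun ν => ∑ n ∈ range (ν.degree + 1), c n * (T^[n] f) ν

lemma eqExp_eq_opSeries (q : ℂ) : eqExp (N := N) q = opSeries (eqCoeff q) := rfl

lemma EqExp_eq_opSeries (q : ℂ) : EqExp (N := N) q = opSeries (EqCoeff q) := rfl

variable {A B T U : MvPowerSeries σ ℂ → MvPowerSeries σ ℂ}

lemma opSeries_apply_eq_sum (hT : IsRaisingOp 1 T) (c : ℕ → ℂ) (f : MvPowerSeries σ ℂ)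
    {ν : σ →₀ ℕ} {M : ℕ} (hν : ν.degree < M) :
    opSeries c T f ν = ∑ n ∈ range M, c n * (T^[n] f) ν := by
  refine sum_subset (range_subset_range.mpr hν) fun n _ hn => ?_
  rw [(hT.iterate n).apply_eq_zero f (by simp at hn; omega), mul_zero]

lemma apply_opSeries_eq_sum (hU : IsRaisingOp 0 U) (hT : IsRaisingOp 1 T) (c : ℕ → ℂ)
    (f : MvPowerSeries σ ℂ) {ν : σ →₀ ℕ} {M : ℕ} (hν : ν.degree < M) :
    U (opSeries c T f) ν = ∑ n ∈ range M, c n * U (T^[n] f) ν := by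
  have htail : (M : ℕ∞) ≤ (opSeries c T f - ∑ n ∈ range M, c n • T^[n] f).order := by
    refine nat_le_order fun μ hμ => ?_
    change opSeries c T f μ - (∑ n ∈ range M, c n • T^[n] f) μ = 0
    rw [sum_smul_apply, sub_eq_zero]
    exact opSeries_apply_eq_sum hT c f hμ
  have hU0 := coeff_of_lt_order <| (ENat.natCast_lt_natCast.mpr hν).trans_le <|
    htail.trans (by simpa using hU.order_add_le _)
  rw [hU.isLinearMap.map_sub] at hU0
  change U _ ν - U _ ν = 0 at hU0
  rw [sub_eq_zero.mp hU0, hU.map_sum_smul, sum_smul_apply]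

lemma apply_opSeries_opSeries_eq_sum (hU : IsRaisingOp 0 U) (hA : IsRaisingOp 1 A)
    (hB : IsRaisingOp 1 B) (c d : ℕ → ℂ) (f : MvPowerSeries σ ℂ) {ν : σ →₀ ℕ} {M : ℕ}
    (hν : ν.degree < M) :
    U (opSeries c A (opSeries d B f)) ν
      = ∑ a ∈ range M, ∑ b ∈ range M, c a * d b * U (A^[a] (B^[b] f)) ν := by
  rw [apply_opSeries_eq_sum hU hA c _ hν]
  refine sum_congr rfl fun a _ => ?_
  have hUA := (hU.comp (hA.iterate a)).mono (Nat.zero_le _)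
  rw [Function.comp_def] at hUA
  rw [apply_opSeries_eq_sum hUA hB d f hν, mul_sum]
  simp only [mul_assoc]

lemma opSeries_opSeries_apply_eq_sum (hA : IsRaisingOp 1 A) (hB : IsRaisingOp 1 B)
    (c d : ℕ → ℂ) (f : MvPowerSeries σ ℂ) {ν : σ →₀ ℕ} {M : ℕ} (hν : ν.degree < M) :
    opSeries c A (opSeries d B f) ν
      = ∑ a ∈ range M, ∑ b ∈ range M, c a * d b * (A^[a] (B^[b] f)) ν :=
  apply_opSeries_opSeries_eq_sum IsRaisingOp.id hA hB c d f hν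

lemma opSeries_comm (hA : IsRaisingOp 1 A) (hB : IsRaisingOp 1 B) (h : Function.Commute A B)
    (c d : ℕ → ℂ) (f : MvPowerSeries σ ℂ) :
    opSeries c A (opSeries d B f) = opSeries d B (opSeries c A f) := by
  funext ν
  have hν := Nat.lt_succ_self ν.degree
  rw [opSeries_opSeries_apply_eq_sum hA hB c d f hν,
    opSeries_opSeries_apply_eq_sum hB hA d c f hν, sum_comm]
  refine sum_congr rfl fun b _ => sum_congr rfl fun a _ => ?_
  rw [(h.iterate_left a).iterate_right b, mul_comm (c a)]

lemma opSeries_opSeries_self (hT : IsRaisingOp 1 T) (c d : ℕ → ℂ) (f : MvPowerSeries σ ℂ) :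
    opSeries c T (opSeries d T f)
      = opSeries (fun j => ∑ p ∈ antidiagonal j, c p.1 * d p.2) T f := by
  funext ν
  have hν := Nat.lt_succ_self ν.degree
  rw [opSeries_opSeries_apply_eq_sum hT hT c d f hν, opSeries_apply_eq_sum hT _ f hν]
  simp_rw [← Function.iterate_add_apply]
  rw [sum_range_sum_range_eq_sum_antidiagonal]
  · simp_rw [sum_mul]
    refine sum_congr rfl fun j _ => sum_congr rfl fun p hp => ?_
    rw [mem_antidiagonal.mp hp]
  · intro a b hab
    rw [(hT.iterate (a + b)).apply_eq_zero f (by omega), mul_zero]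

end RaisingOperators

section QCommutation

variable {σ : Type*} {A B : MvPowerSeries σ ℂ → MvPowerSeries σ ℂ} {c : ℂ}

lemma iterate_map_smul (hA : IsLinearMap ℂ A) (n : ℕ) (c : ℂ) (f : MvPowerSeries σ ℂ) :
    A^[n] (c • f) = c • A^[n] f :=
  (Function.Commute.iterate_right (f := (c • ·)) (fun f => (hA.map_smul c f).symm) n f).symm

variable (hA : IsLinearMap ℂ A) (hB : IsLinearMap ℂ B) (h : ∀ f, B (A f) = c • A (B f))
include hA hB h

lemma iterate_iterate_of_comm_smul (a b : ℕ) (f : MvPowerSeries σ ℂ) :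
    B^[a] (A^[b] f) = c ^ (a * b) • A^[b] (B^[a] f) := by
  have hB1 : ∀ b f, B (A^[b] f) = c ^ b • A^[b] (B f) := by
    intro b
    induction b with
    | zero => simp
    | succ b ih =>
      intro f
      rw [Function.iterate_succ_apply, ih, h, iterate_map_smul hA, smul_smul, ← pow_succ,
        ← Function.iterate_succ_apply]
  induction a generalizing f with
  | zero => simp
  | succ a ih =>
    rw [Function.iterate_succ_apply, hB1, iterate_map_smul hB, ih, smul_smul, ← pow_add,
      ← Function.iterate_succ_apply, add_mul, one_mul, add_comm]

lemma comp_iterate_of_comm_smul (m : ℕ) (f : MvPowerSeries σ ℂ) :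
    (A ∘ B)^[m] f = c ^ (m * (m - 1) / 2) • A^[m] (B^[m] f) := by
  induction m generalizing f with
  | zero => simp
  | succ m ih =>
    have hBA := iterate_iterate_of_comm_smul hA hB h m 1 (B f)
    rw [Function.iterate_one, mul_one] at hBA
    rw [Function.iterate_succ_apply, ih, Function.comp_apply, hBA, iterate_map_smul hA, smul_smul,
      ← pow_add, ← Nat.triangle_succ, ← Function.iterate_succ_apply,
      ← Function.iterate_succ_apply]

end QCommutation

section QExponentials

variable {σ : Type*} {q : ℂ} (hq : ∀ n : ℕ, 0 < n → q ^ n ≠ 1)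
include hq

-- `𝐞 T` is `e_q(−T)` and `𝐄 T` is `E_q(T)`
local notation "𝐞" => opSeries (eqCoeff q)
local notation "𝐄" => opSeries (EqCoeff q)

section Pentagon

variable {A B T : MvPowerSeries σ ℂ → MvPowerSeries σ ℂ}

theorem opSeries_pentagon (hA : IsRaisingOp 1 A) (hB : IsRaisingOp 1 B)
    (h : ∀ f, B (A f) = q • A (B f)) (g : MvPowerSeries σ ℂ) :
    𝐞 B (𝐞 A (𝐄 B g)) = 𝐞 A (𝐞 (A ∘ B) g) := by
  funext ν
  set M := ν.degree + 1
  have hν : ν.degree < M := Nat.lt_succ_self _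
  have hX : ∀ b j, M ≤ b + j → A^[b] (B^[j] g) ν = 0 := fun b j hbj =>
    ((hA.iterate b).comp (hB.iterate j)).apply_eq_zero g (by omega)
  have lhs : 𝐞 B (𝐞 A (𝐄 B g)) ν
      = ∑ b ∈ range M, ∑ j ∈ range M,
          (∑ p ∈ antidiagonal j, eqCoeff q p.1 * EqCoeff q p.2 * q ^ (p.1 * b)) * eqCoeff q b
            * A^[b] (B^[j] g) ν := by
    rw [opSeries_apply_eq_sum hB _ _ hν]
    simp_rw [apply_opSeries_opSeries_eq_sum ((hB.iterate _).mono (Nat.zero_le _)) hA hB _ _ _ hν,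
      iterate_iterate_of_comm_smul hA.isLinearMap hB.isLinearMap h, ← Function.iterate_add_apply,
      mul_sum, MvPowerSeries.smul_apply]
    rw [sum_comm]
    refine sum_congr rfl fun b _ => ?_
    rw [sum_range_sum_range_eq_sum_antidiagonal]
    · refine sum_congr rfl fun j _ => ?_
      rw [sum_mul, sum_mul]
      refine sum_congr rfl fun p hp => ?_
      rw [mem_antidiagonal.mp hp]
      ring
    · intro a c hac
      rw [hX b (a + c) (by omega)]
      ring
  have rhs : 𝐞 A (𝐞 (A ∘ B) g) ν
      = ∑ b ∈ range M, ∑ p ∈ antidiagonal b,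
          eqCoeff q p.1 * eqCoeff q p.2 * q ^ (p.2 * (p.2 - 1) / 2) * A^[b] (B^[p.2] g) ν := by
    rw [opSeries_opSeries_apply_eq_sum hA ((hA.comp hB).mono (by omega)) _ _ _ hν]
    simp_rw [comp_iterate_of_comm_smul hA.isLinearMap hB.isLinearMap h,
      iterate_map_smul hA.isLinearMap, ← Function.iterate_add_apply, MvPowerSeries.smul_apply]
    rw [sum_range_sum_range_eq_sum_antidiagonal]
    · refine sum_congr rfl fun b _ => sum_congr rfl fun p hp => ?_
      rw [mem_antidiagonal.mp hp]
      ring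
    · intro n m hnm
      rw [hX (n + m) m (by omega)]
      ring
  rw [lhs, rhs]
  refine sum_congr rfl fun b hb => ?_
  have hbM : b + 1 ≤ M := by simpa using hb
  simp_rw [sum_antidiagonal_eqCoeff_mul_EqCoeff hq]
  rw [← sum_subset (range_subset_range.mpr hbM) fun j _ hj => by
      rw [if_neg (by simp at hj; omega), zero_mul],
    ← Nat.sum_antidiagonal_swap, Nat.sum_antidiagonal_eq_sum_range_succ_mk]
  refine sum_congr rfl fun j hj => ?_
  rw [if_pos (by simp at hj; omega)]
  rfl

lemma opSeries_EqCoeff_opSeries_eqCoeff (hT : IsRaisingOp 1 T) (f : MvPowerSeries σ ℂ) :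
    𝐄 T (𝐞 T f) = f := by
  rw [opSeries_opSeries_self hT]
  funext ν
  simp only [opSeries, sum_antidiagonal_EqCoeff_mul_eqCoeff hq, ite_mul, one_mul, zero_mul,
    sum_ite_eq', mem_range, Nat.zero_lt_succ, if_true, Function.iterate_zero_apply]

theorem opSeries_pentagon' (hA : IsRaisingOp 1 A) (hB : IsRaisingOp 1 B)
    (h : ∀ f, A (B f) = q • B (A f)) (g : MvPowerSeries σ ℂ) :
    𝐄 B (𝐞 A (𝐞 B g)) = 𝐞 (B ∘ A) (𝐞 A g) := by
  have h' := opSeries_pentagon hq hB hA h (𝐞 A g)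
  rw [opSeries_EqCoeff_opSeries_eqCoeff hq hA] at h'
  rw [h', opSeries_EqCoeff_opSeries_eqCoeff hq hB]

end Pentagon

section Chains

variable {x : ℕ → MvPowerSeries σ ℂ → MvPowerSeries σ ℂ} {K : ℕ} (hx : ∀ i, IsRaisingOp 1 (x i))
  (hfar : ∀ i j, i + 2 ≤ j → j ≤ K → Function.Commute (x j) (x i))
include hx hfar

theorem conj_opSeries_eq_compAsc
    (hadj : ∀ i < K, ∀ f, x (i + 1) (x i f) = q • x i (x (i + 1) f)) {k : ℕ} (hk : k ≤ K) :
    compDesc (fun j => 𝐞 (x (j + 1))) k ∘ 𝐞 (x 0) ∘ compAsc (fun j => 𝐄 (x (j + 1))) k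
      = compAsc (fun j => 𝐞 (compAsc x (j + 1))) (k + 1) := by
  induction k with
  | zero => rfl
  | succ k ih =>
    have hY : ∀ i, IsRaisingOp 1 (compAsc x (i + 1)) := fun i =>
      (IsRaisingOp.compAsc hx (i + 1)).mono (by omega)
    have hBY : ∀ i ≤ k, Function.Commute (x (k + 1)) (compAsc x i) := fun i hi =>
      Function.Commute.compAsc fun m hm => hfar m (k + 1) (by omega) hk
    have hq_comm : ∀ f, x (k + 1) (compAsc x (k + 1) f) = q • compAsc x (k + 1) (x (k + 1) f) :=
      fun f => by
        rw [compAsc, Function.comp_apply, hBY k le_rfl, hadj k (by omega),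
          (IsRaisingOp.compAsc hx k).map_smul]
        rfl
    have heY : ∀ i < k, Function.Commute (𝐞 (x (k + 1))) (𝐞 (compAsc x (i + 1))) := fun i hi =>
      opSeries_comm (hx _) (hY i) (hBY (i + 1) (by omega)) _ _
    funext f
    calc _ = 𝐞 (x (k + 1))
            (compAsc (fun j => 𝐞 (compAsc x (j + 1))) (k + 1) (𝐄 (x (k + 1)) f)) := by
          rw [← ih (by omega)]; rfl
      _ = compAsc (fun j => 𝐞 (compAsc x (j + 1))) k
            (𝐞 (x (k + 1)) (𝐞 (compAsc x (k + 1)) (𝐄 (x (k + 1)) f))) :=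
          Function.Commute.compAsc heY _
      _ = _ := by rw [opSeries_pentagon hq (hY k) (hx _) hq_comm]; rfl

theorem conj_opSeries_eq_compDesc
    (hadj : ∀ i < K, ∀ f, x i (x (i + 1) f) = q • x (i + 1) (x i f)) {k : ℕ} (hk : k ≤ K) :
    compDesc (fun j => 𝐄 (x (j + 1))) k ∘ 𝐞 (x 0) ∘ compAsc (fun j => 𝐞 (x (j + 1))) k
      = compDesc (fun j => 𝐞 (compDesc x (j + 1))) (k + 1) := by
  induction k with
  | zero => rfl
  | succ k ih =>
    have hW : ∀ i, IsRaisingOp 1 (compDesc x (i + 1)) := fun i =>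
      (IsRaisingOp.compDesc hx (i + 1)).mono (by omega)
    have hBW : ∀ i ≤ k, Function.Commute (x (k + 1)) (compDesc x i) := fun i hi =>
      Function.Commute.compDesc fun m hm => hfar m (k + 1) (by omega) hk
    have hq_comm : ∀ f, compDesc x (k + 1) (x (k + 1) f) = q • x (k + 1) (compDesc x (k + 1) f) :=
      fun f => by
        rw [compDesc, Function.comp_apply, ← hBW k le_rfl, hadj k (by omega)]
        rfl
    have heW : ∀ i < k, Function.Commute (𝐞 (x (k + 1))) (𝐞 (compDesc x (i + 1))) := fun i hi =>
      opSeries_comm (hx _) (hW i) (hBW (i + 1) (by omega)) _ _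
    funext f
    calc _ = 𝐄 (x (k + 1))
            (compDesc (fun j => 𝐞 (compDesc x (j + 1))) (k + 1) (𝐞 (x (k + 1)) f)) := by
          rw [← ih (by omega)]; rfl
      _ = 𝐄 (x (k + 1)) (𝐞 (compDesc x (k + 1))
            (𝐞 (x (k + 1)) (compDesc (fun j => 𝐞 (compDesc x (j + 1))) k f))) :=
          congrArg (fun g => 𝐄 (x (k + 1)) (𝐞 (compDesc x (k + 1)) g))
            (Function.Commute.compDesc heW f).symm
      _ = _ := by rw [opSeries_pentagon' hq (hW k) (hx _) hq_comm]; rfl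

end Chains

end QExponentials

section WeightedShift

variable {σ : Type*}

def scaleCoeffs (w : (σ →₀ ℕ) → ℂ) (f : MvPowerSeries σ ℂ) : MvPowerSeries σ ℂ :=
  fun ν => w ν * f ν

lemma scaleCoeffs_scaleCoeffs (w v : (σ →₀ ℕ) → ℂ) (f : MvPowerSeries σ ℂ) :
    scaleCoeffs w (scaleCoeffs v f) = scaleCoeffs (w * v) f :=
  funext fun _ => (mul_assoc _ _ _).symm

lemma X_mul_apply (j : σ) (f : MvPowerSeries σ ℂ) (ν : σ →₀ ℕ) :
    (X j * f : MvPowerSeries σ ℂ) ν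
      = if Finsupp.single j 1 ≤ ν then f (ν - Finsupp.single j 1) else 0 := by
  change coeff ν (X j * f) = _
  rw [X_def, coeff_monomial_mul, one_mul]
  rfl

lemma scaleCoeffs_X_mul (w : (σ →₀ ℕ) → ℂ) (j : σ) (f : MvPowerSeries σ ℂ) :
    scaleCoeffs w (X j * f) = X j * scaleCoeffs (fun ν => w (ν + Finsupp.single j 1)) f := by
  funext ν
  simp only [scaleCoeffs, X_mul_apply]
  split_ifs with h
  · rw [tsub_add_cancel_of_le h]
  · rw [mul_zero]

def weightedShift (i : σ) (w : (σ →₀ ℕ) → ℂ) (f : MvPowerSeries σ ℂ) : MvPowerSeries σ ℂ :=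
  X i * scaleCoeffs w f

lemma isRaisingOp_weightedShift (i : σ) (w : (σ →₀ ℕ) → ℂ) : IsRaisingOp 1 (weightedShift i w) where
  isLinearMap := by
    refine ⟨fun f g => ?_, fun c f => ?_⟩
    · rw [weightedShift, weightedShift, weightedShift, ← mul_add]
      congr 1
      funext ν
      exact mul_add _ _ _
    · rw [weightedShift, weightedShift, ← mul_smul_comm]
      congr 1
      funext ν
      exact mul_left_comm _ _ _
  order_add_le f := by
    have hX : (X i : MvPowerSeries σ ℂ).order = 1 := by
      rw [X_def, order_monomial_of_ne_zero one_ne_zero, Finsupp.degree_single, Nat.cast_one]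
    have hw : f.order ≤ (scaleCoeffs w f).order := le_order fun d hd => by
      change w d * f d = 0
      rw [show f d = coeff d f from rfl, coeff_of_lt_order hd, mul_zero]
    calc f.order + ↑1 ≤ (X i).order + (scaleCoeffs w f).order := by
          rw [hX, add_comm]; gcongr
      _ ≤ _ := le_order_mul

lemma weightedShift_comm {i j : σ} {w v : (σ →₀ ℕ) → ℂ} {c : ℂ}
    (h : ∀ ρ, w (ρ + Finsupp.single j 1) * v ρ = c * (v (ρ + Finsupp.single i 1) * w ρ))
    (f : MvPowerSeries σ ℂ) :
    weightedShift i w (weightedShift j v f) = c • weightedShift j v (weightedShift i w f) := by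
  -- both sides send `x^ρ` to a multiple of `x^(ρ + eᵢ + eⱼ)`, and `h` compares the multiples
  simp only [weightedShift, scaleCoeffs_X_mul, scaleCoeffs_scaleCoeffs, ← mul_assoc,
    mul_comm (X i : MvPowerSeries σ ℂ) (X j), ← mul_smul_comm]
  congr 1
  funext ν
  change ((fun ν => w (ν + Finsupp.single j 1)) * v : (σ →₀ ℕ) → ℂ) ν * f ν = _
  rw [Pi.mul_apply, h, mul_assoc]
  rfl

end WeightedShift

section ZModIndices

lemma ZMod.natCast_ne_zero_of_lt {n : ℕ} (h0 : 0 < n) (h : n < N) : (n : ZMod N) ≠ 0 := by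
  rw [Ne, ZMod.natCast_eq_zero_iff]
  exact fun hd => absurd (Nat.le_of_dvd h0 hd) (by omega)

lemma ZMod.natCast_ne_natCast_of_lt {a b : ℕ} (ha : a < N) (hb : b < N) (h : a ≠ b) :
    (a : ZMod N) ≠ b := by
  rwa [Ne, ZMod.natCast_eq_natCast_iff', Nat.mod_eq_of_lt ha, Nat.mod_eq_of_lt hb]

lemma ZMod.natCast_not_adjacent {i j : ℕ} (hij : i + 2 ≤ j) (hj : j + 2 ≤ N) :
    (j : ZMod N) ≠ i ∧ (j : ZMod N) ≠ i + 1 ∧ (i : ZMod N) ≠ j + 1 := by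
  refine ⟨natCast_ne_natCast_of_lt (by omega) (by omega) (by omega), ?_, ?_⟩
  · exact_mod_cast natCast_ne_natCast_of_lt (N := N) (b := i + 1) (by omega) (by omega) (by omega)
  · exact_mod_cast natCast_ne_natCast_of_lt (N := N) (b := j + 1) (by omega) (by omega) (by omega)

variable (hN : 3 ≤ N)
include hN

lemma ZMod.add_one_ne_self (i : ZMod N) : i + 1 ≠ i := by
  have h1 : ((1 : ℕ) : ZMod N) ≠ 0 := ZMod.natCast_ne_zero_of_lt one_pos (by omega)
  exact fun h => h1 (by push_cast; linear_combination h)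

lemma ZMod.add_one_ne_sub_one (i : ZMod N) : i + 1 ≠ i - 1 := by
  have h2 : ((2 : ℕ) : ZMod N) ≠ 0 := ZMod.natCast_ne_zero_of_lt two_pos (by omega)
  exact fun h => h2 (by push_cast; linear_combination h)

end ZModIndices

section Generators

variable (q : ℂ)

lemma xcheck_eq_weightedShift (i : ZMod N) :
    xcheck q i = weightedShift i (fun ν => q ^ (-(ν i : ℤ)) * q ^ ν (i - 1)) :=
  funext fun f => congrArg (X i * ·) (scaleCoeffs_scaleCoeffs _ _ f)

lemma xhat_eq_weightedShift (α : ZMod N → ℂ) (i : ZMod N) :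
    xhat q α i = weightedShift i (fun ν => α i * (q ^ ν i * q ^ (-(ν (i - 1) : ℤ)))) := by
  funext f
  rw [xhat, ← mul_smul_comm]
  congr 1
  funext ν
  change α i * (q ^ ν i * (q ^ (-(ν (i - 1) : ℤ)) * f ν)) = _ * f ν
  ring

lemma isRaisingOp_xcheck (i : ZMod N) : IsRaisingOp 1 (xcheck q i) := by
  rw [xcheck_eq_weightedShift]
  exact isRaisingOp_weightedShift _ _

lemma isRaisingOp_xhat (α : ZMod N → ℂ) (i : ZMod N) : IsRaisingOp 1 (xhat q α i) := by
  rw [xhat_eq_weightedShift]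
  exact isRaisingOp_weightedShift _ _

lemma xcheck_commute {i j : ZMod N} (hij : i ≠ j) (h1 : i ≠ j + 1) (h2 : j ≠ i + 1) :
    Function.Commute (xcheck q i) (xcheck q j) := fun f => by
  have h1' : j ≠ i - 1 := fun h => h1 (by rw [h]; ring)
  have h2' : i ≠ j - 1 := fun h => h2 (by rw [h]; ring)
  rw [xcheck_eq_weightedShift q i, xcheck_eq_weightedShift q j, weightedShift_comm (c := 1),
    one_smul]
  intro ρ
  simp [hij, hij.symm, h1', h2']
  ring

lemma xhat_commute (α : ZMod N → ℂ) {i j : ZMod N} (hij : i ≠ j) (h1 : i ≠ j + 1)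
    (h2 : j ≠ i + 1) : Function.Commute (xhat q α i) (xhat q α j) := fun f => by
  have h1' : j ≠ i - 1 := fun h => h1 (by rw [h]; ring)
  have h2' : i ≠ j - 1 := fun h => h2 (by rw [h]; ring)
  rw [xhat_eq_weightedShift q α i, xhat_eq_weightedShift q α j, weightedShift_comm (c := 1),
    one_smul]
  intro ρ
  simp [hij, hij.symm, h1', h2']
  ring

variable (hN : 3 ≤ N)
include hN

lemma xcheck_add_one_comm (i : ZMod N) (f : MvPowerSeries (ZMod N) ℂ) :
    xcheck q (i + 1) (xcheck q i f) = q • xcheck q i (xcheck q (i + 1) f) := by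
  rw [xcheck_eq_weightedShift q i, xcheck_eq_weightedShift q (i + 1), weightedShift_comm]
  intro ρ
  simp [ZMod.add_one_ne_self hN, (ZMod.add_one_ne_self hN i).symm, ZMod.add_one_ne_sub_one hN]
  ring

lemma xhat_add_one_comm (hq0 : q ≠ 0) (α : ZMod N → ℂ) (i : ZMod N)
    (f : MvPowerSeries (ZMod N) ℂ) :
    xhat q α i (xhat q α (i + 1) f) = q • xhat q α (i + 1) (xhat q α i f) := by
  rw [xhat_eq_weightedShift q α i, xhat_eq_weightedShift q α (i + 1), weightedShift_comm]
  intro ρ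
  simp [ZMod.add_one_ne_self hN, (ZMod.add_one_ne_self hN i).symm, ZMod.add_one_ne_sub_one hN,
    zpow_add₀ hq0]
  field_simp

end Generators

/-- **Proposition 2.3**, left and right blocks:
`A_L^{(s)} = A_L^{(h)}` and `A_R^{(s)} = A_R^{(h)}`. -/
theorem factorized_forms_agree (q : ℂ) (hq0 : q ≠ 0) (hq : ∀ n : ℕ, 0 < n → q ^ n ≠ 1)
    (N : ℕ) [NeZero N] (hN : 3 ≤ N) (α : ZMod N → ℂ) :
    -- left block:  G_L⁻¹ ∘ e(−x̌_0) ∘ G_L ∘ e(−x̌_{N−1}) ∘ ⋯ ∘ e(−x̌_1) ∘ M_{φ(Λ)}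
    --   = e(−x̌_0) ∘ e(−x̌_0x̌_1) ∘ ⋯ ∘ e(−x̌_0⋯x̌_{N−2}) ∘ e(−x̌_{N−1}) ∘ ⋯ ∘ e(−x̌_1) ∘ M_{φ(Λ)}
    ((compDesc (fun j => eqExp q (xcheck (N := N) q (j + 1 : ℕ))) (N - 2))
        ∘ eqExp q (xcheck (N := N) q 0)
        ∘ (compAsc (fun j => EqExp q (xcheck (N := N) q (j + 1 : ℕ))) (N - 2))
        ∘ (compDesc (fun j => eqExp q (xcheck (N := N) q (j + 1 : ℕ))) (N - 1))
        ∘ (fun f => phiLam (N := N) q 1 * f)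
      = (compAsc (fun j =>
            eqExp q (compAsc (fun m => xcheck (N := N) q (m : ℕ)) (j + 1))) (N - 1))
        ∘ (compDesc (fun j => eqExp q (xcheck (N := N) q (j + 1 : ℕ))) (N - 1))
        ∘ (fun f => phiLam (N := N) q 1 * f))
    ∧
    -- right block:  M_{φ(q^{1−N}DΛ)} ∘ e(−x̂_1) ∘ ⋯ ∘ e(−x̂_{N−1}) ∘ G_R ∘ e(−x̂_0) ∘ G_R⁻¹
    --   = M_{φ(q^{1−N}DΛ)} ∘ e(−x̂_1) ∘ ⋯ ∘ e(−x̂_{N−1})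
    --       ∘ e(−x̂_{N−2}⋯x̂_1x̂_0) ∘ ⋯ ∘ e(−x̂_1x̂_0) ∘ e(−x̂_0)
    ((fun f => phiLam (N := N) q (q ^ ((1 : ℤ) - (N : ℤ)) * ∏ i : ZMod N, α i) * f)
        ∘ (compAsc (fun j => eqExp q (xhat q α (j + 1 : ℕ))) (N - 1))
        ∘ (compDesc (fun j => EqExp q (xhat q α (j + 1 : ℕ))) (N - 2))
        ∘ eqExp q (xhat q α 0)
        ∘ (compAsc (fun j => eqExp q (xhat q α (j + 1 : ℕ))) (N - 2))
      = (fun f => phiLam (N := N) q (q ^ ((1 : ℤ) - (N : ℤ)) * ∏ i : ZMod N, α i) * f)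
        ∘ (compAsc (fun j => eqExp q (xhat q α (j + 1 : ℕ))) (N - 1))
        ∘ (compAsc (fun j =>
            eqExp q (compDesc (fun m => xhat q α (m : ℕ)) ((N - 2 - j) + 1))) (N - 2))
        ∘ eqExp q (xhat q α 0)) := by
  have hfar : ∀ i j : ℕ, i + 2 ≤ j → j ≤ N - 2 →
      (j : ZMod N) ≠ i ∧ (j : ZMod N) ≠ i + 1 ∧ (i : ZMod N) ≠ j + 1 :=
    fun i j hij hj => ZMod.natCast_not_adjacent hij (by omega)
  have left := conj_opSeries_eq_compAsc (x := fun m : ℕ => xcheck (N := N) q m) hq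
    (fun _ => isRaisingOp_xcheck q _)
    (fun i j hij hj => let ⟨h0, h1, h2⟩ := hfar i j hij hj; xcheck_commute q h0 h1 h2)
    (fun i _ f => by simpa only [Nat.cast_succ] using xcheck_add_one_comm q hN (i : ZMod N) f)
    le_rfl
  have right := conj_opSeries_eq_compDesc (x := fun m : ℕ => xhat q α m) hq
    (fun _ => isRaisingOp_xhat q α _)
    (fun i j hij hj => let ⟨h0, h1, h2⟩ := hfar i j hij hj; xhat_commute q α h0 h1 h2)
    (fun i _ f => by simpa only [Nat.cast_succ] using xhat_add_one_comm q hN hq0 α (i : ZMod N) f)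
    le_rfl
  rw [show N - 2 + 1 = N - 1 by omega] at left
  rw [compDesc_succ_eq_compAsc, zero_add, compDesc_one] at right
  simp only [← eqExp_eq_opSeries, ← EqExp_eq_opSeries, Nat.cast_zero] at left right
  exact ⟨congrArg (· ∘ _) left, congrArg (fun T => _ ∘ _ ∘ T) right⟩
end
end
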